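/- arXiv:2306.08494 — 4 statements merged into one kernel-verified Lean document; each statement's English description precedes it below -/
import Mathlib

section
/- Let α ∈ (0,1) and C > 0, and let (a_n), (b_n), (c_n) be positive sequences satisfying a_{n+1} ≤ (1−α)a_n + b_n and c_{n+1} ≤ c_n − b_n + C for all n. Then for every n, a_{n+1} ≤ (1−α)^{n+1} a_0 + (1−α)^n c_0 + α Σ_{k=0}^{n} (1−α)^{n−k} c_k + C/α. -/
theorem stmt_3 (α C : ℝ) (hα : α ∈ Set.Ioo (0 : ℝ) 1) (hC : 0 < C)
    (a b c : ℕ → ℝ)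
    (ha : ∀ n, 0 < a n) (hb : ∀ n, 0 < b n) (hc : ∀ n, 0 < c n)
    (hrec1 : ∀ n : ℕ, a (n + 1) ≤ (1 - α) * a n + b n)
    (hrec2 : ∀ n : ℕ, c (n + 1) ≤ c n - b n + C) :
    ∀ n : ℕ, a (n + 1) ≤ (1 - α) ^ (n + 1) * a 0 + (1 - α) ^ n * c 0
      + α * ∑ k ∈ Finset.range (n + 1), (1 - α) ^ (n - k) * c k + C / α := by
  obtain ⟨hα0, hα1⟩ := hα
  have h1α : (0:ℝ) < 1 - α := by linarith
  -- shift identity for the weighted sum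
  have hS : ∀ n : ℕ, ∑ k ∈ Finset.range (n + 2), (1 - α) ^ (n + 1 - k) * c k
      = (1 - α) * ∑ k ∈ Finset.range (n + 1), (1 - α) ^ (n - k) * c k + c (n + 1) := by
    intro n
    rw [Finset.sum_range_succ, Finset.mul_sum]
    congr 1
    · refine Finset.sum_congr rfl fun k hk => ?_
      have hk' : k ≤ n := Nat.lt_succ_iff.mp (Finset.mem_range.mp hk)
      rw [show n + 1 - k = (n - k) + 1 by omega, pow_succ]
      ring
    · simp
  -- geometric sum identity
  have hT : ∀ n : ℕ, ∑ k ∈ Finset.range (n + 1), (1 - α) ^ k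
      = (1 - α) * ∑ k ∈ Finset.range n, (1 - α) ^ k + 1 := by
    intro n
    rw [Finset.sum_range_succ', pow_zero, Finset.mul_sum]
    congr 1
    exact Finset.sum_congr rfl fun i _ => (pow_succ' (1 - α) i)
  -- strengthened induction
  have key : ∀ n : ℕ, a (n + 1) + c (n + 1) ≤ (1 - α) ^ (n + 1) * a 0 + (1 - α) ^ n * c 0
      + α * ∑ k ∈ Finset.range (n + 1), (1 - α) ^ (n - k) * c k
      + C * ∑ k ∈ Finset.range (n + 1), (1 - α) ^ k := by
    intro n
    induction n with
    | zero =>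
      have h1 := hrec1 0
      have h2 := hrec2 0
      norm_num [Finset.sum_range_one]
      nlinarith [hc 0]
    | succ n ih =>
      have h1 := hrec1 (n + 1)
      have h2 := hrec2 (n + 1)
      have step : a (n + 2) + c (n + 2) ≤ (1 - α) * (a (n + 1) + c (n + 1))
          + α * c (n + 1) + C := by nlinarith
      have ih' := mul_le_mul_of_nonneg_left ih (le_of_lt h1α)
      rw [hS n, hT (n + 1)]
      calc a (n + 2) + c (n + 2)
          ≤ (1 - α) * (a (n + 1) + c (n + 1)) + α * c (n + 1) + C := step
        _ ≤ (1 - α) * ((1 - α) ^ (n + 1) * a 0 + (1 - α) ^ n * c 0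
              + α * ∑ k ∈ Finset.range (n + 1), (1 - α) ^ (n - k) * c k
              + C * ∑ k ∈ Finset.range (n + 1), (1 - α) ^ k)
              + α * c (n + 1) + C := by linarith
        _ = (1 - α) ^ (n + 1 + 1) * a 0 + (1 - α) ^ (n + 1) * c 0
              + α * ((1 - α) * ∑ k ∈ Finset.range (n + 1), (1 - α) ^ (n - k) * c k + c (n + 1))
              + C * ((1 - α) * ∑ k ∈ Finset.range (n + 1), (1 - α) ^ k + 1) := by ring
  -- geometric sum bound
  have hg : ∀ m : ℕ, ∑ k ∈ Finset.range m, (1 - α) ^ k ≤ 1 / α := by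
    intro m
    have hm := geom_sum_mul (1 - α) m
    have hpow : (0:ℝ) ≤ (1 - α) ^ m := pow_nonneg (le_of_lt h1α) m
    rw [le_div_iff₀ hα0]
    nlinarith
  intro n
  have hgn := hg (n + 1)
  have hCg : C * ∑ k ∈ Finset.range (n + 1), (1 - α) ^ k ≤ C / α := by
    rw [div_eq_mul_one_div]
    exact mul_le_mul_of_nonneg_left hgn (le_of_lt hC)
  have := key n
  have hcpos := hc (n + 1)
  linarith
end

section
/- Let ρ ∈ (0,1), F_0 ≥ 0, α_0, η, γ, p > 0, and let (F_n), (z_n), (V_n) be real sequences with F_n ≥ 0 and V_n ≥ 0 satisfying 2(F_{n+1} − F_n) ≤ 2α_0 η z_n + 0.0182 η V_n + (2/15) η³ γ p for all n. Then for every n, α_0 · max(0, −η Σ_{k=0}^{n} ρ^{n−k} z_k) ≤ ρⁿ F_0 + (1−ρ) Σ_{k=0}^{n} ρ^{n−k} F_k + 0.0182 η Σ_{k=0}^{n} ρ^{n−k} V_k + 2η³γp / (15(1−ρ)). -/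
lemma shift_sum (ρ : ℝ) (a : ℕ → ℝ) (n : ℕ) :
    ∑ k ∈ Finset.range (n + 2), ρ ^ (n + 1 - k) * a k
      = ρ * ∑ k ∈ Finset.range (n + 1), ρ ^ (n - k) * a k + a (n + 1) := by
  rw [Finset.sum_range_succ, Finset.mul_sum]
  congr 1
  · refine Finset.sum_congr rfl fun k hk => ?_
    have hk' : k ≤ n := by simpa [Nat.lt_succ_iff] using hk
    have h : n + 1 - k = (n - k) + 1 := by omega
    rw [h, pow_succ]; ring
  · simp

theorem stmt_12 (ρ α₀ η γ p : ℝ) (hρ : ρ ∈ Set.Ioo (0 : ℝ) 1)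
    (hα₀ : 0 < α₀) (hη : 0 < η) (hγ : 0 < γ) (hp : 0 < p)
    (F z V : ℕ → ℝ) (hF : ∀ n, 0 ≤ F n) (hV : ∀ n, 0 ≤ V n)
    (hrec : ∀ n : ℕ, 2 * (F (n + 1) - F n)
      ≤ 2 * α₀ * η * z n + 0.0182 * η * V n + 2 / 15 * η ^ 3 * γ * p) :
    ∀ n : ℕ,
      α₀ * max 0 (-(η * ∑ k ∈ Finset.range (n + 1), ρ ^ (n - k) * z k))
        ≤ ρ ^ n * F 0
          + (1 - ρ) * ∑ k ∈ Finset.range (n + 1), ρ ^ (n - k) * F k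
          + 0.0182 * η * ∑ k ∈ Finset.range (n + 1), ρ ^ (n - k) * V k
          + 2 * η ^ 3 * γ * p / (15 * (1 - ρ)) := by
  obtain ⟨hρ0, hρ1⟩ := hρ
  have h1ρ : 0 < 1 - ρ := by linarith
  intro n
  -- nonnegativity of pieces of RHS
  have hpow : ∀ k, (0:ℝ) ≤ ρ ^ (n - k) := fun k => pow_nonneg hρ0.le _
  have hFsum : 0 ≤ ∑ k ∈ Finset.range (n + 1), ρ ^ (n - k) * F k :=
    Finset.sum_nonneg fun k _ => mul_nonneg (hpow k) (hF k)
  have hVsum : 0 ≤ ∑ k ∈ Finset.range (n + 1), ρ ^ (n - k) * V k :=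
    Finset.sum_nonneg fun k _ => mul_nonneg (hpow k) (hV k)
  have hc : (0:ℝ) ≤ η ^ 3 * γ * p := by positivity
  have hRHS : 0 ≤ ρ ^ n * F 0
          + (1 - ρ) * ∑ k ∈ Finset.range (n + 1), ρ ^ (n - k) * F k
          + 0.0182 * η * ∑ k ∈ Finset.range (n + 1), ρ ^ (n - k) * V k
          + 2 * η ^ 3 * γ * p / (15 * (1 - ρ)) := by
    have h1 : 0 ≤ ρ ^ n * F 0 := mul_nonneg (pow_nonneg hρ0.le _) (hF 0)
    have h2 : 0 ≤ (1 - ρ) * ∑ k ∈ Finset.range (n + 1), ρ ^ (n - k) * F k :=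
      mul_nonneg h1ρ.le hFsum
    have h3 : 0 ≤ 0.0182 * η * ∑ k ∈ Finset.range (n + 1), ρ ^ (n - k) * V k := by
      have : (0:ℝ) ≤ 0.0182 * η := by positivity
      exact mul_nonneg this hVsum
    have h4 : 0 ≤ 2 * η ^ 3 * γ * p / (15 * (1 - ρ)) := by positivity
    linarith
  -- geometric sum bound
  have hgeom : ∑ k ∈ Finset.range (n + 1), ρ ^ (n - k) ≤ 1 / (1 - ρ) := by
    have hrefl : ∑ k ∈ Finset.range (n + 1), ρ ^ (n + 1 - 1 - k)
        = ∑ k ∈ Finset.range (n + 1), ρ ^ k :=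
      Finset.sum_range_reflect (fun k => ρ ^ k) (n + 1)
    have hrw : ∑ k ∈ Finset.range (n + 1), ρ ^ (n - k)
        = ∑ k ∈ Finset.range (n + 1), ρ ^ k := by
      rw [← hrefl]
      exact Finset.sum_congr rfl fun k _ => by norm_num
    rw [hrw, geom_sum_eq (by linarith : ρ ≠ 1)]
    have hpn : (0:ℝ) ≤ ρ ^ (n + 1) := pow_nonneg hρ0.le _
    have heq : (ρ ^ (n + 1) - 1) / (ρ - 1) = (1 - ρ ^ (n + 1)) / (1 - ρ) := by
      rw [← neg_div_neg_eq]; ring_nf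
    rw [heq, div_le_div_iff₀ h1ρ h1ρ]
    nlinarith
  -- telescoping bound
  have htel : ∀ m : ℕ, ∑ k ∈ Finset.range (m + 1), ρ ^ (m - k) * (F k - F (k + 1))
      ≤ ρ ^ m * F 0 - F (m + 1) + (1 - ρ) * ∑ k ∈ Finset.range (m + 1), ρ ^ (m - k) * F k := by
    intro m
    induction m with
    | zero =>
      simp
      nlinarith [hF 0]
    | succ m ih =>
      rw [shift_sum ρ (fun k => F k - F (k + 1)) m, shift_sum ρ F m, pow_succ]
      nlinarith [mul_le_mul_of_nonneg_left ih hρ0.le]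
  -- termwise bound from recursion
  have hterm : ∀ k ∈ Finset.range (n + 1),
      ρ ^ (n - k) * (-(α₀ * η * z k))
        ≤ ρ ^ (n - k) * (F k - F (k + 1)) + ρ ^ (n - k) * (0.0182 * η * V k)
          + ρ ^ (n - k) * (2 / 15 * η ^ 3 * γ * p) := by
    intro k _
    have inner : -(α₀ * η * z k) ≤ (F k - F (k + 1)) + 0.0182 * η * V k
        + 2 / 15 * η ^ 3 * γ * p := by
      have h := hrec k
      have hv : 0 ≤ η * V k := mul_nonneg hη.le (hV k)
      nlinarith
    calc ρ ^ (n - k) * (-(α₀ * η * z k))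
        ≤ ρ ^ (n - k) * ((F k - F (k + 1)) + 0.0182 * η * V k + 2 / 15 * η ^ 3 * γ * p) :=
          mul_le_mul_of_nonneg_left inner (hpow k)
      _ = ρ ^ (n - k) * (F k - F (k + 1)) + ρ ^ (n - k) * (0.0182 * η * V k)
          + ρ ^ (n - k) * (2 / 15 * η ^ 3 * γ * p) := by ring
  have hsum := Finset.sum_le_sum hterm
  rw [Finset.sum_add_distrib, Finset.sum_add_distrib] at hsum
  -- rewrite the three sums
  have eV : ∑ k ∈ Finset.range (n + 1), ρ ^ (n - k) * (0.0182 * η * V k)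
      = 0.0182 * η * ∑ k ∈ Finset.range (n + 1), ρ ^ (n - k) * V k := by
    rw [Finset.mul_sum]; exact Finset.sum_congr rfl fun k _ => by ring
  have eC : ∑ k ∈ Finset.range (n + 1), ρ ^ (n - k) * (2 / 15 * η ^ 3 * γ * p)
      = (2 / 15 * η ^ 3 * γ * p) * ∑ k ∈ Finset.range (n + 1), ρ ^ (n - k) := by
    rw [Finset.mul_sum]; exact Finset.sum_congr rfl fun k _ => by ring
  have e0 : ∑ k ∈ Finset.range (n + 1), ρ ^ (n - k) * (α₀ * η * z k)
      = α₀ * (η * ∑ k ∈ Finset.range (n + 1), ρ ^ (n - k) * z k) := by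
    rw [Finset.mul_sum, Finset.mul_sum]
    exact Finset.sum_congr rfl fun k _ => by ring
  have eL : ∑ k ∈ Finset.range (n + 1), ρ ^ (n - k) * (-(α₀ * η * z k))
      = α₀ * (-(η * ∑ k ∈ Finset.range (n + 1), ρ ^ (n - k) * z k)) := by
    simp only [mul_neg, Finset.sum_neg_distrib, e0]
  rw [eV, eC, eL] at hsum
  -- bound constant term
  have hCbound : (2 / 15 * η ^ 3 * γ * p) * ∑ k ∈ Finset.range (n + 1), ρ ^ (n - k)
      ≤ 2 * η ^ 3 * γ * p / (15 * (1 - ρ)) := by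
    have hcpos : (0:ℝ) ≤ 2 / 15 * η ^ 3 * γ * p := by positivity
    have := mul_le_mul_of_nonneg_left hgeom hcpos
    calc (2 / 15 * η ^ 3 * γ * p) * ∑ k ∈ Finset.range (n + 1), ρ ^ (n - k)
        ≤ (2 / 15 * η ^ 3 * γ * p) * (1 / (1 - ρ)) := this
      _ = 2 * η ^ 3 * γ * p / (15 * (1 - ρ)) := by
          rw [mul_one_div, div_eq_div_iff h1ρ.ne' (by positivity)]; ring
  have hmain : α₀ * (-(η * ∑ k ∈ Finset.range (n + 1), ρ ^ (n - k) * z k))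
      ≤ ρ ^ n * F 0
        + (1 - ρ) * ∑ k ∈ Finset.range (n + 1), ρ ^ (n - k) * F k
        + 0.0182 * η * ∑ k ∈ Finset.range (n + 1), ρ ^ (n - k) * V k
        + 2 * η ^ 3 * γ * p / (15 * (1 - ρ)) := by
    have := htel n
    have hFn1 := hF (n + 1)
    linarith
  rw [mul_max_of_nonneg _ _ hα₀.le, mul_zero]
  exact max_le hRHS hmain
end

section
/- Let m, M > 0 with m ≤ M, let γ ≥ m + M, and consider two solutions (L_t, V_t) and (L'_t, V'_t) of the kinetic Langevin SDE dL = V dt, dV = −γV dt − γ∇f(L) dt + √2 γ dW driven by the same Brownian motion, where f is twice differentiable with m·I ≼ ∇²f ≼ M·I. Define Z_t = V_t − V'_t and Y_t = V_t − V'_t + γ(L_t − L'_t). Then (d/dt)(‖Y_t‖² + ‖Z_t‖²) ≤ −2 min(m, γ−M) (‖Y_t‖² + ‖Z_t‖²), and consequently (‖Y_t‖² + ‖Z_t‖²)^{1/2} ≤ e^{−min(m, γ−M) t} (‖Y_0‖² + ‖Z_0‖²)^{1/2}. -/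
/-!
Write `Z = V - V'` and `Y = Z + γ (L - L')`. The noise cancels in the differences, and
`Y' = -γ (∇f L - ∇f L')`, `Z' = -γ Z - γ (∇f L - ∇f L')`. By the mean value theorem,
`∇f L - ∇f L' = H (L - L')` for a symmetric `H` with `m ≤ H ≤ M`, and `γ (L - L') = Y - Z`,
so `γ ⟪H (L - L'), Y + Z⟫ = ⟪H Y, Y⟫ - ⟪H Z, Z⟫ ≥ m ‖Y‖² - M ‖Z‖²`. This gives
`(‖Y‖² + ‖Z‖²)' ≤ -2 m ‖Y‖² - 2 (γ - M) ‖Z‖²`, and Grönwall's inequality finishes the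
proof.
-/

open scoped RealInnerProductSpace

open Real

theorem mul_sq_sub_mul_sq_le_apply_sub_add {F : Type*} [NormedAddCommGroup F] [NormedSpace ℝ F]
    {B : F →L[ℝ] F →L[ℝ] ℝ} (hB : ∀ u w, B u w = B w u)
    {m M : ℝ} {u w : F} (hu : m * ‖u‖ ^ 2 ≤ B u u) (hw : B w w ≤ M * ‖w‖ ^ 2) :
    m * ‖u‖ ^ 2 - M * ‖w‖ ^ 2 ≤ B (u - w) (u + w) := by
  have hpolar : B (u - w) (u + w) = B u u - B w w := by
    simp only [map_sub, map_add, sub_apply, hB w u]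
    ring
  linarith

section Hessian

variable {E : Type*} [NormedAddCommGroup E] [InnerProductSpace ℝ E] [CompleteSpace E]

theorem exists_inner_gradient_sub_eq_fderiv_fderiv {f : E → ℝ}
    (hf : Differentiable ℝ (fderiv ℝ f)) (x y v : E) :
    ∃ z ∈ segment ℝ y x,
      ⟪gradient f x - gradient f y, v⟫ = fderiv ℝ (fderiv ℝ f) z (x - y) v := by
  set c : ℝ → E := fun s => y + s • (x - y)
  have hc : ∀ s, HasDerivAt c (x - y) s := fun s =>
    ((hasDerivAt_id s).smul_const (x - y)).const_add y |>.congr_deriv (one_smul ℝ _)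
  have hg : ∀ s, HasDerivAt (fun s => fderiv ℝ f (c s) v)
      (fderiv ℝ (fderiv ℝ f) (c s) (x - y) v) s :=
    fun s => ((hf (c s)).hasFDerivAt.comp_hasDerivAt s (hc s)).clm_apply (hasDerivAt_const s v)
      |>.congr_deriv (by simp)
  obtain ⟨s, hs, hslope⟩ := exists_hasDerivAt_eq_slope _ _ zero_lt_one
    (fun s _ => (hg s).continuousAt.continuousWithinAt) (fun s _ => hg s)
  refine ⟨c s, segment_eq_image' ℝ y x ▸ ⟨s, Set.Ioo_subset_Icc_self hs, rfl⟩, ?_⟩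
  rw [hslope, inner_sub_left, inner_gradient_left, inner_gradient_left]
  simp [c]

variable {f : E → ℝ} {m M γ : ℝ}

theorem mul_sq_sub_mul_sq_le_inner_gradient_sub (hf : ContDiff ℝ 2 f)
    (hlow : ∀ z v : E, m * ‖v‖ ^ 2 ≤ iteratedFDeriv ℝ 2 f z ![v, v])
    (hup : ∀ z v : E, iteratedFDeriv ℝ 2 f z ![v, v] ≤ M * ‖v‖ ^ 2)
    {x y u w : E} (huw : u - w = γ • (x - y)) :
    m * ‖u‖ ^ 2 - M * ‖w‖ ^ 2 ≤ γ * ⟪gradient f x - gradient f y, u + w⟫ := by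
  obtain ⟨z, -, hz⟩ := exists_inner_gradient_sub_eq_fderiv_fderiv
    ((hf.fderiv_right le_rfl).differentiable one_ne_zero) x y (u + w)
  have hsymm : ∀ a b, fderiv ℝ (fderiv ℝ f) z a b = fderiv ℝ (fderiv ℝ f) z b a :=
    (hf.contDiffAt.isSymmSndFDerivAt (by simp)).eq
  have hHess : ∀ v, iteratedFDeriv ℝ 2 f z ![v, v] = fderiv ℝ (fderiv ℝ f) z v v := by
    simp [iteratedFDeriv_two_apply]
  have hscale : γ * fderiv ℝ (fderiv ℝ f) z (x - y) (u + w)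
      = fderiv ℝ (fderiv ℝ f) z (u - w) (u + w) := by
    simp [huw]
  rw [hz, hscale]
  exact mul_sq_sub_mul_sq_le_apply_sub_add hsymm (hHess u ▸ hlow z u) (hHess w ▸ hup z w)

/-- With `Y = z + γ (x - y)` and `Z = z`, the left-hand side is `(‖Y‖² + ‖Z‖²)'` along the
coupled flow. -/
theorem twisted_energy_dissipation (hf : ContDiff ℝ 2 f)
    (hlow : ∀ z v : E, m * ‖v‖ ^ 2 ≤ iteratedFDeriv ℝ 2 f z ![v, v])
    (hup : ∀ z v : E, iteratedFDeriv ℝ 2 f z ![v, v] ≤ M * ‖v‖ ^ 2) (x y z : E) :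
    2 * ⟪z + γ • (x - y), -(γ • (gradient f x - gradient f y))⟫
        + 2 * ⟪z, -(γ • z) - γ • (gradient f x - gradient f y)⟫
      ≤ -2 * min m (γ - M) * (‖z + γ • (x - y)‖ ^ 2 + ‖z‖ ^ 2) := by
  have hgrad := mul_sq_sub_mul_sq_le_inner_gradient_sub (γ := γ) hf hlow hup
    (x := x) (y := y) (u := z + γ • (x - y)) (w := z) (by abel)
  have hexpand : 2 * ⟪z + γ • (x - y), -(γ • (gradient f x - gradient f y))⟫
        + 2 * ⟪z, -(γ • z) - γ • (gradient f x - gradient f y)⟫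
      = -2 * (γ * ⟪gradient f x - gradient f y, z + γ • (x - y) + z⟫) - 2 * γ * ‖z‖ ^ 2 := by
    simp only [inner_neg_right, inner_sub_right, real_inner_smul_right, inner_add_right,
      real_inner_self_eq_norm_sq, real_inner_comm (gradient f x - gradient f y)]
    ring
  rw [hexpand]
  nlinarith [min_le_left m (γ - M), min_le_right m (γ - M), sq_nonneg ‖z‖,
    sq_nonneg ‖z + γ • (x - y)‖]

end Hessian

theorem le_exp_mul_mul_of_hasDerivAt_le_mul {N N' : ℝ → ℝ} {c : ℝ}
    (hN : ∀ s, HasDerivAt N (N' s) s) (hbound : ∀ s, N' s ≤ c * N s) {t : ℝ} (ht : 0 ≤ t) :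
    N t ≤ exp (c * t) * N 0 := by
  have hdiff : ∀ s, HasDerivAt (fun r => exp (-c * r) * N r)
      (exp (-c * s) * -c * N s + exp (-c * s) * N' s) s := fun s =>
    (((hasDerivAt_id s).const_mul (-c)).exp.congr_deriv (by simp)).mul (hN s)
  have hanti : Antitone (fun r => exp (-c * r) * N r) :=
    antitone_of_deriv_nonpos (fun s => (hdiff s).differentiableAt) fun s => by
      rw [(hdiff s).deriv]
      nlinarith [exp_pos (-c * s), hbound s]
  have h := hanti ht
  simp only [mul_zero, exp_zero, one_mul] at h
  calc N t = exp (c * t) * (exp (-c * t) * N t) := by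
        rw [← mul_assoc, ← exp_add]; simp
    _ ≤ exp (c * t) * N 0 := by gcongr

theorem stmt_15_general (p : ℕ) (m M γ : ℝ)
    (f : EuclideanSpace ℝ (Fin p) → ℝ) (hf : ContDiff ℝ 2 f)
    (hHess : ∀ θ v : EuclideanSpace ℝ (Fin p),
      m * ‖v‖ ^ 2 ≤ iteratedFDeriv ℝ 2 f θ ![v, v] ∧
      iteratedFDeriv ℝ 2 f θ ![v, v] ≤ M * ‖v‖ ^ 2)
    (L V L' V' : ℝ → EuclideanSpace ℝ (Fin p))
    (hL : ∀ t, HasDerivAt (fun s => L s - L' s) (V t - V' t) t)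
    (hV : ∀ t, HasDerivAt (fun s => V s - V' s)
      (-(γ • (V t - V' t)) - γ • (gradient f (L t) - gradient f (L' t))) t) :
    (∀ t : ℝ, 0 ≤ t →
        deriv (fun s => ‖V s - V' s + γ • (L s - L' s)‖ ^ 2 + ‖V s - V' s‖ ^ 2) t
          ≤ -2 * min m (γ - M)
              * (‖V t - V' t + γ • (L t - L' t)‖ ^ 2 + ‖V t - V' t‖ ^ 2)) ∧
    (∀ t : ℝ, 0 ≤ t →
        Real.sqrt (‖V t - V' t + γ • (L t - L' t)‖ ^ 2 + ‖V t - V' t‖ ^ 2)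
          ≤ Real.exp (-(min m (γ - M)) * t)
              * Real.sqrt (‖V 0 - V' 0 + γ • (L 0 - L' 0)‖ ^ 2 + ‖V 0 - V' 0‖ ^ 2)) := by
  have hY : ∀ t, HasDerivAt (fun s => V s - V' s + γ • (L s - L' s))
      (-(γ • (gradient f (L t) - gradient f (L' t)))) t := fun t =>
    ((hV t).add ((hL t).const_smul γ)).congr_deriv (by module)
  have hN := fun t => (hY t).norm_sq.add (hV t).norm_sq
  have hbound : ∀ t, deriv (fun s => ‖V s - V' s + γ • (L s - L' s)‖ ^ 2 + ‖V s - V' s‖ ^ 2) t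
      ≤ -2 * min m (γ - M) * (‖V t - V' t + γ • (L t - L' t)‖ ^ 2 + ‖V t - V' t‖ ^ 2) :=
    fun t => (hN t).deriv ▸ twisted_energy_dissipation hf (fun z v => (hHess z v).1)
      (fun z v => (hHess z v).2) (L t) (L' t) (V t - V' t)
  refine ⟨fun t _ => hbound t, fun t ht => ?_⟩
  calc _ ≤ √(exp (-2 * min m (γ - M) * t)
          * (‖V 0 - V' 0 + γ • (L 0 - L' 0)‖ ^ 2 + ‖V 0 - V' 0‖ ^ 2)) :=
        sqrt_le_sqrt (le_exp_mul_mul_of_hasDerivAt_le_mul hN (fun s => (hN s).deriv ▸ hbound s) ht)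
    _ = _ := by
        rw [sqrt_mul (exp_nonneg _), ← exp_half]
        congr 2
        ring

/-- Synchronous-coupling contraction for the kinetic Langevin diffusion.
Since the two solutions are driven by the same Brownian motion, the noise
cancels in the differences, so the difference process satisfies the ODEs
stated in the hypotheses `hL` and `hV` below. -/
theorem stmt_15 (p : ℕ) (m M γ : ℝ) (hm : 0 < m) (hmM : m ≤ M) (hγ : m + M ≤ γ)
    (f : EuclideanSpace ℝ (Fin p) → ℝ) (hf : ContDiff ℝ 2 f)
    (hHess : ∀ θ v : EuclideanSpace ℝ (Fin p),
      m * ‖v‖ ^ 2 ≤ iteratedFDeriv ℝ 2 f θ ![v, v] ∧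
      iteratedFDeriv ℝ 2 f θ ![v, v] ≤ M * ‖v‖ ^ 2)
    (L V L' V' : ℝ → EuclideanSpace ℝ (Fin p))
    (hL : ∀ t, HasDerivAt (fun s => L s - L' s) (V t - V' t) t)
    (hV : ∀ t, HasDerivAt (fun s => V s - V' s)
      (-(γ • (V t - V' t)) - γ • (gradient f (L t) - gradient f (L' t))) t) :
    (∀ t : ℝ, 0 ≤ t →
        deriv (fun s => ‖V s - V' s + γ • (L s - L' s)‖ ^ 2 + ‖V s - V' s‖ ^ 2) t
          ≤ -2 * min m (γ - M)
              * (‖V t - V' t + γ • (L t - L' t)‖ ^ 2 + ‖V t - V' t‖ ^ 2)) ∧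
    (∀ t : ℝ, 0 ≤ t →
        Real.sqrt (‖V t - V' t + γ • (L t - L' t)‖ ^ 2 + ‖V t - V' t‖ ^ 2)
          ≤ Real.exp (-(min m (γ - M)) * t)
              * Real.sqrt (‖V 0 - V' 0 + γ • (L 0 - L' 0)‖ ^ 2 + ‖V 0 - V' 0‖ ^ 2)) :=
  stmt_15_general p m M γ f hf hHess L V L' V' hL hV
end

section
/- Let m, M, γ > 0, let H be a symmetric p×p matrix with m·I ≼ H ≼ M·I and γ ≥ M, and let y, z ∈ ℝᵖ. Then 2⟨y, −H y + H z⟩ + 2⟨z, −γ z − H y + H z⟩ ≤ −2 min(m, γ−M) (‖y‖² + ‖z‖²). -/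
open RealInnerProductSpace

theorem stmt_16 (p : ℕ) (m M γ : ℝ) (hm : 0 < m) (hM : 0 < M) (hγM : M ≤ γ)
    (H : EuclideanSpace ℝ (Fin p) →ₗ[ℝ] EuclideanSpace ℝ (Fin p))
    (hsymm : ∀ x y : EuclideanSpace ℝ (Fin p), ⟪H x, y⟫ = ⟪x, H y⟫)
    (hlow : ∀ v : EuclideanSpace ℝ (Fin p), m * ‖v‖ ^ 2 ≤ ⟪H v, v⟫)
    (hup : ∀ v : EuclideanSpace ℝ (Fin p), ⟪H v, v⟫ ≤ M * ‖v‖ ^ 2)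
    (y z : EuclideanSpace ℝ (Fin p)) :
    2 * ⟪y, -(H y) + H z⟫ + 2 * ⟪z, -(γ • z) - H y + H z⟫
      ≤ -2 * min m (γ - M) * (‖y‖ ^ 2 + ‖z‖ ^ 2) := by
  have hcross : ⟪y, H z⟫ = ⟪z, H y⟫ := by
    rw [real_inner_comm, hsymm, real_inner_comm]
  have h1 : m * ‖y‖ ^ 2 ≤ ⟪y, H y⟫ := by rw [real_inner_comm]; exact hlow y
  have h2 : ⟪z, H z⟫ ≤ M * ‖z‖ ^ 2 := by rw [real_inner_comm]; exact hup z
  have hmin1 : min m (γ - M) ≤ m := min_le_left _ _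
  have hmin2 : min m (γ - M) ≤ γ - M := min_le_right _ _
  have hy2 : (0:ℝ) ≤ ‖y‖ ^ 2 := sq_nonneg _
  have hz2 : (0:ℝ) ≤ ‖z‖ ^ 2 := sq_nonneg _
  have expand : 2 * ⟪y, -(H y) + H z⟫ + 2 * ⟪z, -(γ • z) - H y + H z⟫
      = -2*⟪y, H y⟫ + 2*⟪z, H z⟫ - 2*γ*‖z‖^2 := by
    simp only [inner_add_right, inner_sub_right, inner_neg_right, inner_smul_right,
      real_inner_self_eq_norm_sq, hcross]
    ring
  rw [expand]
  nlinarith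
end
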